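/- arXiv:math/0505262 — 2 statements merged into one kernel-verified Lean document; each statement's English description precedes it below -/
import Mathlib

section
/- Let d ≥ 2 be an integer, let α be a composition with r parts, and let k ≥ r with k ≥ 1. Then: (1) there exist non-negative integers c_1,…,c_k with c_k = 1 and a polynomial p ∈ ℤ[t] such that L_k^α[𝔖^d](t) · ∏_{i=1}^{k} (1 − it)^{c_i} = p(t); and (2) there is a positive real constant C such that a_{n,k}^α / k^n → C as n → ∞, where a_{n,k}^α is the number of saturated chains in 𝔖^d starting at α and ending at a composition of n with k parts. -/
/-- A composition: a finite list of positive integers. -/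
def IsComposition (P : List ℕ) : Prop := ∀ x ∈ P, 0 < x

/-- Covering relation of the poset 𝔑: prepend a part 1, append a part 1,
or increase one part by 1. -/
def coverN (P Q : List ℕ) : Prop :=
  Q = 1 :: P ∨ Q = P ++ [1] ∨ ∃ j, j < P.length ∧ Q = P.set j (P.getD j 0 + 1)

/-- `ank cover α n k` is the number of saturated chains (with respect to `cover`)
starting at `α` and ending at a composition of `n` with `k` parts. -/
noncomputable def ank (cover : List ℕ → List ℕ → Prop) (α : List ℕ) (n k : ℕ) : ℕ :=
  Nat.card {c : List (List ℕ) //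
    c.Chain' cover ∧ c.head? = some α ∧
      ∃ Q, c.getLast? = some Q ∧ Q.sum = n ∧ Q.length = k}

/-- The generating function `L_k^α(t) = Σ_n a_{n,k}^α t^n`. -/
noncomputable def Lser (cover : List ℕ → List ℕ → Prop) (α : List ℕ) (k : ℕ) :
    PowerSeries ℤ :=
  PowerSeries.mk fun n => (ank cover α n k : ℤ)

/-- Covering relation of the poset 𝔖^d: insert a part 1 at any position,
increase one part by 1, or replace a part `q` by the two adjacent parts
`(q − s + 1, s)` for some `2 ≤ s < d` with `q − s + 1 ≥ 2`. -/
def coverS (d : ℕ) (P Q : List ℕ) : Prop :=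
  (∃ i, i ≤ P.length ∧ Q = P.take i ++ 1 :: P.drop i) ∨
  (∃ j, j < P.length ∧ Q = P.set j (P.getD j 0 + 1)) ∨
  (∃ j, j < P.length ∧ ∃ s, 2 ≤ s ∧ s < d ∧ 2 ≤ P.getD j 0 - s + 1 ∧
    Q = P.take j ++ (P.getD j 0 - s + 1) :: s :: P.drop (j + 1))

/-!
Write `a_m(l)` for the number of saturated chains of length `m` from `l` to a composition with
`k` parts; it satisfies `a_{m+1}(l) = Σ a_m(γ)` over the upper covers `γ` of `l`. Parts that
are large compared with the number of covers still able to change the number of parts behave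
alike, so the parts of a composition with `j ≤ k` parts can be capped at `d (k + 1 - j)`
without changing any count. Only finitely many capped compositions exist, and for a capped `s`
the generating series satisfies `(1 - m_s t) g_s = [s has k parts] + t Σ g_{cap γ}`, the sum
running over the covers `γ` whose cap differs from `s`, and `m_s ≤ |s|` counting the covers
whose cap is `s` itself. These exits lower a rank, and `m_s = k` forces `|s| = k` with all
exits having too many parts; induction on the rank gives the denominator with `c_k = 1`.

Increasing one of the `k` parts of the last composition gives `k a_n ≤ a_{n+1}`, so `a_n / k^n`
increases. Its increments are the coefficients of `L (1 - k t)` divided by `k^n`, and that series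
times `∏_{i<k} (1 - i t)^{c_i}` is a polynomial, so its coefficients are `O(n^M (k - 1/2)^n)`:
the increments are summable and the limit is finite and positive.
-/

namespace CompositionPoset

/-! ### The finite set of upper covers -/

def insertOne (l : List ℕ) (i : ℕ) : List ℕ := l.take i ++ 1 :: l.drop i

def incrAt (l : List ℕ) (j : ℕ) : List ℕ := l.set j (l.getD j 0 + 1)

def splitAt (l : List ℕ) (p : ℕ × ℕ) : List ℕ :=
  l.take p.1 ++ (l.getD p.1 0 - p.2 + 1) :: p.2 :: l.drop (p.1 + 1)

/-- Inserting a `1` just after a part `1` gives the same list as inserting it just before,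
so only the positions not preceded by a `1` are kept: `insertOne l` is injective on them. -/
def insertPositions (l : List ℕ) : Finset ℕ :=
  (Finset.range (l.length + 1)).filter (fun i => i = 0 ∨ l.getD (i - 1) 0 ≠ 1)

def splitPositions (d : ℕ) (l : List ℕ) : Finset (ℕ × ℕ) :=
  ((Finset.range l.length) ×ˢ (Finset.Icc 2 (d - 1))).filter (fun p => p.2 + 1 ≤ l.getD p.1 0)

def upperCovers (d : ℕ) (l : List ℕ) : Finset (List ℕ) :=
  (insertPositions l).image (insertOne l) ∪ (Finset.range l.length).image (incrAt l) ∪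
    (splitPositions d l).image (splitAt l)

lemma mem_insertPositions {l : List ℕ} {i : ℕ} :
    i ∈ insertPositions l ↔ i ≤ l.length ∧ (i = 0 ∨ l.getD (i - 1) 0 ≠ 1) := by
  simp only [insertPositions, Finset.mem_filter, Finset.mem_range, Nat.lt_succ_iff]

lemma mem_splitPositions {d : ℕ} {l : List ℕ} {p : ℕ × ℕ} :
    p ∈ splitPositions d l ↔ p.1 < l.length ∧ 2 ≤ p.2 ∧ p.2 ≤ d - 1 ∧ p.2 + 1 ≤ l.getD p.1 0 := by
  simp only [splitPositions, Finset.mem_filter, Finset.mem_product, Finset.mem_range,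
    Finset.mem_Icc, and_assoc]

lemma take_append_getD_cons_drop (l : List ℕ) {j : ℕ} (hj : j < l.length) :
    l.take j ++ l.getD j 0 :: l.drop (j + 1) = l := by
  rw [List.getD_eq_getElem _ _ hj, ← List.drop_eq_getElem_cons hj, List.take_append_drop]

lemma set_eq_take_append_cons_drop (l : List ℕ) {j : ℕ} (hj : j < l.length) (v : ℕ) :
    l.set j v = l.take j ++ v :: l.drop (j + 1) := by
  rw [List.set_eq_take_append_cons_drop, if_pos hj]

lemma sum_insertOne (l : List ℕ) (i : ℕ) : (insertOne l i).sum = l.sum + 1 := by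
  have := List.sum_take_add_sum_drop l i
  simp only [insertOne, List.sum_append, List.sum_cons]
  omega

lemma sum_incrAt (l : List ℕ) {j : ℕ} (hj : j < l.length) : (incrAt l j).sum = l.sum + 1 := by
  have := congrArg List.sum (take_append_getD_cons_drop l hj)
  simp only [incrAt, set_eq_take_append_cons_drop l hj, List.sum_append, List.sum_cons] at this ⊢
  omega

lemma sum_splitAt (l : List ℕ) {p : ℕ × ℕ} (hj : p.1 < l.length) (hs : p.2 + 1 ≤ l.getD p.1 0) :
    (splitAt l p).sum = l.sum + 1 := by
  have := congrArg List.sum (take_append_getD_cons_drop l hj)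
  simp only [splitAt, List.sum_append, List.sum_cons] at this ⊢
  omega

lemma length_insertOne (l : List ℕ) {i : ℕ} (hi : i ≤ l.length) :
    (insertOne l i).length = l.length + 1 := by
  simp only [insertOne, List.length_append, List.length_take, List.length_cons, List.length_drop]
  omega

lemma length_incrAt (l : List ℕ) (j : ℕ) : (incrAt l j).length = l.length :=
  List.length_set ..

lemma length_splitAt (l : List ℕ) {p : ℕ × ℕ} (hj : p.1 < l.length) :
    (splitAt l p).length = l.length + 1 := by
  simp only [splitAt, List.length_append, List.length_take, List.length_cons, List.length_drop]
  omega

lemma insertOne_succ_of_getD_eq_one (l : List ℕ) {i : ℕ} (h : i < l.length)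
    (h1 : l.getD i 0 = 1) : insertOne l (i + 1) = insertOne l i := by
  rw [List.getD_eq_getElem _ _ h] at h1
  rw [insertOne, insertOne, List.take_add_one, List.drop_eq_getElem_cons h,
    List.getElem?_eq_getElem h, h1]
  simp

lemma exists_mem_insertPositions (l : List ℕ) {i : ℕ} (hi : i ≤ l.length) :
    ∃ i' ∈ insertPositions l, insertOne l i' = insertOne l i := by
  induction i with
  | zero => exact ⟨0, mem_insertPositions.2 ⟨Nat.zero_le _, Or.inl rfl⟩, rfl⟩
  | succ i ih =>
    by_cases h1 : l.getD i 0 = 1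
    · obtain ⟨i', hi', he⟩ := ih (by omega)
      exact ⟨i', hi', he.trans (insertOne_succ_of_getD_eq_one l (by omega) h1).symm⟩
    · exact ⟨i + 1, mem_insertPositions.2 ⟨hi, Or.inr h1⟩, rfl⟩

lemma mem_upperCovers {d : ℕ} {l γ : List ℕ} : γ ∈ upperCovers d l ↔ coverS d l γ := by
  simp only [upperCovers, Finset.mem_union, Finset.mem_image, Finset.mem_range, Prod.exists,
    mem_insertPositions, mem_splitPositions]
  constructor
  · rintro ((⟨i, ⟨hi, -⟩, rfl⟩ | ⟨j, hj, rfl⟩) | ⟨j, s, ⟨hj, hs, hsd, hq⟩, rfl⟩)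
    · exact Or.inl ⟨i, hi, rfl⟩
    · exact Or.inr (Or.inl ⟨j, hj, rfl⟩)
    · exact Or.inr (Or.inr ⟨j, hj, s, hs, by omega, by omega, rfl⟩)
  · rintro (⟨i, hi, rfl⟩ | ⟨j, hj, rfl⟩ | ⟨j, hj, s, hs, hsd, hq, rfl⟩)
    · obtain ⟨i', hi', he⟩ := exists_mem_insertPositions l hi
      exact Or.inl (Or.inl ⟨i', mem_insertPositions.1 hi', he⟩)
    · exact Or.inl (Or.inr ⟨j, hj, rfl⟩)
    · exact Or.inr ⟨j, s, ⟨hj, hs, by omega, by omega⟩, rfl⟩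

lemma sum_of_mem_upperCovers {d : ℕ} {l γ : List ℕ} (h : γ ∈ upperCovers d l) :
    γ.sum = l.sum + 1 := by
  simp only [upperCovers, Finset.mem_union, Finset.mem_image, Finset.mem_range] at h
  rcases h with (⟨i, -, rfl⟩ | ⟨j, hj, rfl⟩) | ⟨p, hp, rfl⟩
  · exact sum_insertOne l i
  · exact sum_incrAt l hj
  · obtain ⟨hj, -, -, hs⟩ := mem_splitPositions.1 hp
    exact sum_splitAt l hj hs

lemma length_of_mem_upperCovers {d : ℕ} {l γ : List ℕ} (h : γ ∈ upperCovers d l) :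
    γ.length = l.length ∨ γ.length = l.length + 1 := by
  simp only [upperCovers, Finset.mem_union, Finset.mem_image, Finset.mem_range] at h
  rcases h with (⟨i, hi, rfl⟩ | ⟨j, -, rfl⟩) | ⟨p, hp, rfl⟩
  · exact Or.inr (length_insertOne l (mem_insertPositions.1 hi).1)
  · exact Or.inl (length_incrAt l j)
  · exact Or.inr (length_splitAt l (mem_splitPositions.1 hp).1)

lemma exists_eq_incrAt_of_mem_upperCovers {d : ℕ} {l γ : List ℕ} (h : γ ∈ upperCovers d l)
    (hlen : γ.length = l.length) : ∃ j < l.length, γ = incrAt l j := by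
  simp only [upperCovers, Finset.mem_union, Finset.mem_image, Finset.mem_range] at h
  rcases h with (⟨i, hi, rfl⟩ | ⟨j, hj, rfl⟩) | ⟨p, hp, rfl⟩
  · rw [length_insertOne l (mem_insertPositions.1 hi).1] at hlen; omega
  · exact ⟨j, hj, rfl⟩
  · rw [length_splitAt l (mem_splitPositions.1 hp).1] at hlen; omega

/-! ### Counting upper covers by their positions -/

lemma getD_append_cons_of_length_lt {α : Type*} {a : List α} (b : List α) (x y : α) {p : ℕ}
    (h : a.length < p) : (a ++ x :: b).getD p y = b.getD (p - a.length - 1) y := by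
  obtain ⟨q, rfl⟩ : ∃ q, p = a.length + q + 1 := ⟨p - a.length - 1, by omega⟩
  rw [List.getD_append_right _ _ _ _ (by omega), show a.length + q + 1 - a.length = q + 1 by omega]
  simp

lemma getD_insertOne_self {l : List ℕ} {i : ℕ} (h : i ≤ l.length) :
    (insertOne l i).getD i 0 = 1 := by
  simp [insertOne, h]

lemma getD_insertOne_of_lt {l : List ℕ} {i p : ℕ} (hi : i ≤ l.length) (h : i < p) :
    (insertOne l i).getD p 0 = l.getD (p - 1) 0 := by
  have hlen : (l.take i).length = i := by simp [hi]
  obtain ⟨q, rfl⟩ : ∃ q, p = i + q + 1 := ⟨p - i - 1, by omega⟩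
  rw [insertOne, getD_append_cons_of_length_lt _ _ _ (by omega), hlen,
    show i + q + 1 - i - 1 = q by omega, Nat.add_sub_cancel]
  simp only [List.getD_eq_getElem?_getD, List.getElem?_drop]

lemma getD_incrAt_self {l : List ℕ} {j : ℕ} (h : j < l.length) :
    (incrAt l j).getD j 0 = l.getD j 0 + 1 := by
  rw [incrAt, List.getD_eq_getElem _ _ (by simpa using h), List.getElem_set_self]

lemma getD_incrAt_of_ne {l : List ℕ} {j p : ℕ} (h : j ≠ p) :
    (incrAt l j).getD p 0 = l.getD p 0 := by
  simp only [incrAt, List.getD_eq_getElem?_getD, List.getElem?_set_ne h]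

lemma getD_splitAt_succ {l : List ℕ} {j : ℕ} (h : j < l.length) (s : ℕ) :
    (splitAt l (j, s)).getD (j + 1) 0 = s := by
  simp [splitAt, h.le]

lemma getD_splitAt_of_succ_lt {l : List ℕ} {j p : ℕ} (h : j < l.length) (s : ℕ)
    (hp : j + 1 < p) : (splitAt l (j, s)).getD p 0 = l.getD (p - 1) 0 := by
  have hlen : (l.take j).length = j := by simp [h.le]
  obtain ⟨q, rfl⟩ : ∃ q, p = j + q + 2 := ⟨p - j - 2, by omega⟩
  dsimp only [splitAt]
  rw [getD_append_cons_of_length_lt _ _ _ (by omega), hlen,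
    show j + q + 2 - j - 1 = q + 1 by omega, List.getD_cons_succ,
    show j + q + 2 - 1 = j + 1 + q by omega]
  simp only [List.getD_eq_getElem?_getD, List.getElem?_drop]

lemma insertOne_injOn (l : List ℕ) : Set.InjOn (insertOne l) (insertPositions l) := by
  have key : ∀ i i', i < i' → i' ∈ insertPositions l → insertOne l i ≠ insertOne l i' := by
    intro i i' hlt hi' heq
    obtain ⟨hle, hne⟩ := mem_insertPositions.1 hi'
    have h := getD_insertOne_of_lt (l := l) (by omega) hlt
    rw [heq, getD_insertOne_self hle] at h
    omega
  intro i hi i' hi' heq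
  rcases lt_trichotomy i i' with h | h | h
  · exact absurd heq (key i i' h hi')
  · exact h
  · exact absurd heq.symm (key i' i h hi)

lemma incrAt_injOn (l : List ℕ) : Set.InjOn (incrAt l) (Finset.range l.length) := by
  intro i hi i' _ heq
  by_contra hne
  have h := getD_incrAt_self (Finset.mem_range.1 hi)
  rw [heq, getD_incrAt_of_ne (Ne.symm hne)] at h
  omega

lemma splitAt_injOn (d : ℕ) (l : List ℕ) : Set.InjOn (splitAt l) (splitPositions d l) := by
  have key : ∀ p p' : ℕ × ℕ, p.1 < p'.1 → p' ∈ splitPositions d l → splitAt l p ≠ splitAt l p' := by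
    rintro ⟨j, s⟩ ⟨j', s'⟩ hlt hp' heq
    obtain ⟨hj', -, -, hq'⟩ := mem_splitPositions.1 hp'
    dsimp only at hlt hj' hq'
    have h := getD_splitAt_of_succ_lt (l := l) (j := j) (p := j' + 1) (by omega) s (by omega)
    rw [heq, getD_splitAt_succ hj', Nat.add_sub_cancel] at h
    omega
  rintro ⟨j, s⟩ hp ⟨j', s'⟩ hp' heq
  rcases lt_trichotomy j j' with h | rfl | h
  · exact absurd heq (key _ _ h hp')
  · have h := getD_splitAt_succ (mem_splitPositions.1 hp).1 s
    rw [heq, getD_splitAt_succ (mem_splitPositions.1 hp').1] at h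
    rw [h]
  · exact absurd heq.symm (key _ _ h hp)

lemma count_one_insertOne (l : List ℕ) (i : ℕ) :
    (insertOne l i).count 1 = l.count 1 + 1 := by
  have h := congrArg (List.count 1) (List.take_append_drop i l)
  rw [List.count_append] at h
  rw [insertOne, List.count_append, List.count_cons_self]
  omega

lemma count_one_splitAt {d : ℕ} {l : List ℕ} {p : ℕ × ℕ} (hp : p ∈ splitPositions d l) :
    (splitAt l p).count 1 = l.count 1 := by
  obtain ⟨hj, hs, -, hq⟩ := mem_splitPositions.1 hp
  have h := congrArg (List.count 1) (take_append_getD_cons_drop l hj)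
  rw [List.count_append, List.count_cons_of_ne (by omega)] at h
  rw [splitAt, List.count_append, List.count_cons_of_ne (by omega),
    List.count_cons_of_ne (by omega)]
  omega

/-- The three kinds of covers are told apart by the length and the number of parts `1`. -/
lemma sum_upperCovers {M : Type*} [AddCommMonoid M] (d : ℕ) (l : List ℕ) (F : List ℕ → M) :
    ∑ γ ∈ upperCovers d l, F γ = ∑ i ∈ insertPositions l, F (insertOne l i) +
      ∑ j ∈ Finset.range l.length, F (incrAt l j) + ∑ p ∈ splitPositions d l, F (splitAt l p) := by
  have hinc : Disjoint ((insertPositions l).image (insertOne l))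
      ((Finset.range l.length).image (incrAt l)) := by
    simp only [Finset.disjoint_left, Finset.mem_image, not_exists, not_and]
    rintro _ ⟨i, hi, rfl⟩ j - h
    have := congrArg List.length h
    rw [length_incrAt, length_insertOne l (mem_insertPositions.1 hi).1] at this
    omega
  have hspl : Disjoint ((insertPositions l).image (insertOne l) ∪
      (Finset.range l.length).image (incrAt l)) ((splitPositions d l).image (splitAt l)) := by
    simp only [Finset.disjoint_left, Finset.mem_union, Finset.mem_image, not_exists, not_and]
    rintro _ (⟨i, -, rfl⟩ | ⟨j, -, rfl⟩) p hp h
    · have := congrArg (List.count 1) h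
      rw [count_one_insertOne, count_one_splitAt hp] at this
      omega
    · have := congrArg List.length h
      rw [length_incrAt, length_splitAt l (mem_splitPositions.1 hp).1] at this
      omega
  rw [upperCovers, Finset.sum_union hspl, Finset.sum_union hinc,
    Finset.sum_image (insertOne_injOn l), Finset.sum_image (incrAt_injOn l),
    Finset.sum_image (splitAt_injOn d l)]

/-! ### Saturated chains -/

def chainsTo (d k : ℕ) (l : List ℕ) (n : ℕ) : Finset (List (List ℕ)) :=
  if _ : n ≤ l.sum then (if n = l.sum ∧ l.length = k then {[l]} else ∅)
  else (upperCovers d l).attach.biUnion fun γ => (chainsTo d k γ.1 n).image (List.cons l)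
termination_by n - l.sum
decreasing_by have := sum_of_mem_upperCovers γ.2; omega

lemma sum_of_getLast?_eq {d : ℕ} {l Q : List ℕ} {t : List (List ℕ)}
    (hc : (l :: t).IsChain (coverS d)) (hQ : (l :: t).getLast? = some Q) :
    Q.sum = l.sum + t.length := by
  induction t generalizing l with
  | nil => simp_all
  | cons γ t ih =>
    rw [List.isChain_cons_cons] at hc
    rw [List.getLast?_cons_cons] at hQ
    rw [ih hc.2 hQ, sum_of_mem_upperCovers (mem_upperCovers.2 hc.1), List.length_cons]
    omega

lemma length_le_of_getLast?_eq {d : ℕ} {l Q : List ℕ} {t : List (List ℕ)}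
    (hc : (l :: t).IsChain (coverS d)) (hQ : (l :: t).getLast? = some Q) :
    l.length ≤ Q.length := by
  induction t generalizing l with
  | nil => simp_all
  | cons γ t ih =>
    rw [List.isChain_cons_cons] at hc
    rw [List.getLast?_cons_cons] at hQ
    have := length_of_mem_upperCovers (mem_upperCovers.2 hc.1)
    have := ih hc.2 hQ
    omega

lemma mem_chainsTo {d k n : ℕ} {l : List ℕ} {c : List (List ℕ)} :
    c ∈ chainsTo d k l n ↔ c.IsChain (coverS d) ∧ c.head? = some l ∧
      ∃ Q, c.getLast? = some Q ∧ Q.sum = n ∧ Q.length = k := by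
  induction l using chainsTo.induct d k n generalizing c with
  | case1 l hn hl =>
    rw [chainsTo, dif_pos hn, if_pos hl, Finset.mem_singleton]
    constructor
    · rintro rfl
      exact ⟨List.isChain_singleton _, rfl, l, rfl, hl.1.symm, hl.2⟩
    · rintro ⟨hc, hh, Q, hQ, hQs, -⟩
      obtain ⟨t, rfl⟩ := List.head?_eq_some_iff.1 hh
      have := sum_of_getLast?_eq hc hQ
      rw [List.length_eq_zero_iff.1 (by omega : t.length = 0)]
  | case2 l hn hl =>
    rw [chainsTo, dif_pos hn, if_neg hl]
    simp only [Finset.notMem_empty, false_iff, not_and, not_exists]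
    intro hc hh Q hQ hQs hQl
    obtain ⟨t, rfl⟩ := List.head?_eq_some_iff.1 hh
    have := sum_of_getLast?_eq hc hQ
    obtain rfl := List.length_eq_zero_iff.1 (by omega : t.length = 0)
    simp only [List.getLast?_singleton, Option.some.injEq] at hQ
    exact hl ⟨by omega, hQ ▸ hQl⟩
  | case3 l hn ih =>
    rw [chainsTo, dif_neg hn]
    simp only [Finset.mem_biUnion, Finset.mem_attach, Finset.mem_image, true_and,
      Subtype.exists]
    constructor
    · rintro ⟨γ, hγ, c', hc', rfl⟩
      obtain ⟨hc, hh, Q, hQ, hQs, hQl⟩ := (ih ⟨γ, hγ⟩).1 hc'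
      obtain ⟨t, rfl⟩ := List.head?_eq_some_iff.1 hh
      refine ⟨List.isChain_cons_cons.2 ⟨mem_upperCovers.1 hγ, hc⟩, rfl, Q, ?_, hQs, hQl⟩
      rwa [List.getLast?_cons_cons]
    · rintro ⟨hc, hh, Q, hQ, hQs, hQl⟩
      obtain ⟨t, rfl⟩ := List.head?_eq_some_iff.1 hh
      cases t with
      | nil =>
        simp only [List.getLast?_singleton, Option.some.injEq] at hQ
        exact absurd (hQ ▸ hQs).ge hn
      | cons γ t =>
        rw [List.isChain_cons_cons] at hc
        rw [List.getLast?_cons_cons] at hQ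
        have hγ := mem_upperCovers.2 hc.1
        exact ⟨γ, hγ, γ :: t, (ih ⟨γ, hγ⟩).2 ⟨hc.2, rfl, Q, hQ, hQs, hQl⟩, rfl⟩

lemma ank_eq_card_chainsTo (d k : ℕ) (α : List ℕ) (n : ℕ) :
    ank (coverS d) α n k = (chainsTo d k α n).card := by
  rw [ank, ← Nat.card_eq_finsetCard]
  exact Nat.card_congr (Equiv.subtypeEquivRight fun c => mem_chainsTo.symm)

lemma chainsTo_eq_empty_of_lt_length {d k : ℕ} {l : List ℕ} (h : k < l.length) (n : ℕ) :
    chainsTo d k l n = ∅ := by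
  refine Finset.eq_empty_of_forall_notMem fun c hc => ?_
  obtain ⟨hc, hh, Q, hQ, -, hQl⟩ := mem_chainsTo.1 hc
  obtain ⟨t, rfl⟩ := List.head?_eq_some_iff.1 hh
  have := length_le_of_getLast?_eq hc hQ
  omega

lemma card_chainsTo_of_sum_lt {d k n : ℕ} {l : List ℕ} (h : l.sum < n) :
    (chainsTo d k l n).card = ∑ γ ∈ upperCovers d l, (chainsTo d k γ n).card := by
  rw [chainsTo, dif_neg (by omega), Finset.card_biUnion,
    ← Finset.sum_attach (upperCovers d l) fun γ => (chainsTo d k γ n).card]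
  · exact Finset.sum_congr rfl fun γ _ => Finset.card_image_of_injective _ List.cons_injective
  · intro γ _ γ' _ hne
    simp only [Finset.disjoint_left, Finset.mem_image, not_exists, not_and]
    rintro _ ⟨c, hc, rfl⟩ c' hc' h
    obtain rfl := List.cons_injective h
    have h1 := (mem_chainsTo.1 hc).2.1
    rw [(mem_chainsTo.1 hc').2.1, Option.some.injEq] at h1
    exact hne (Subtype.ext h1.symm)

def chainCount (d k : ℕ) (l : List ℕ) (m : ℕ) : ℕ := (chainsTo d k l (l.sum + m)).card

lemma chainCount_zero (d k : ℕ) (l : List ℕ) :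
    chainCount d k l 0 = if l.length = k then 1 else 0 := by
  rw [chainCount, Nat.add_zero, chainsTo, dif_pos le_rfl]
  by_cases h : l.length = k <;> simp [h]

lemma chainCount_eq_zero_of_lt_length {d k : ℕ} {l : List ℕ} (h : k < l.length) (m : ℕ) :
    chainCount d k l m = 0 := by
  rw [chainCount, chainsTo_eq_empty_of_lt_length h, Finset.card_empty]

lemma chainCount_succ (d k : ℕ) (l : List ℕ) (m : ℕ) :
    chainCount d k l (m + 1) = ∑ γ ∈ upperCovers d l, chainCount d k γ m := by
  rw [chainCount, card_chainsTo_of_sum_lt (by omega)]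
  refine Finset.sum_congr rfl fun γ hγ => ?_
  rw [chainCount, sum_of_mem_upperCovers hγ, add_right_comm, add_assoc]

/-! ### Capping large parts -/

/-- From a composition with `j ≤ k` parts at most `k - j` covers change the number of parts,
each lowering a part by less than `d`; parts of size at least `capBound d k j` therefore
behave alike, and capping them does not change the number of chains to `k` parts. -/
def capBound (d k j : ℕ) : ℕ := d * (k + 1 - j)

def cap (d k : ℕ) (l : List ℕ) : List ℕ := l.map (min · (capBound d k l.length))

lemma length_cap (d k : ℕ) (l : List ℕ) : (cap d k l).length = l.length :=
  List.length_map ..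

lemma getD_cap (d k : ℕ) (l : List ℕ) (i : ℕ) :
    (cap d k l).getD i 0 = min (l.getD i 0) (capBound d k l.length) := by
  simp only [cap, List.getD_eq_getElem?_getD, List.getElem?_map]
  cases l[i]? <;> simp

lemma cap_cap (d k : ℕ) (l : List ℕ) : cap d k (cap d k l) = cap d k l := by
  simp only [cap, List.length_map, List.map_map]
  exact List.map_congr_left fun a _ => by simp

lemma capBound_eq_succ_add {d k j : ℕ} (hj : j ≤ k) :
    capBound d k j = capBound d k (j + 1) + d := by
  rw [capBound, capBound, show k + 1 - j = k + 1 - (j + 1) + 1 by omega, Nat.mul_succ]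

lemma le_capBound {d k j : ℕ} (hj : j ≤ k) : d ≤ capBound d k j := by
  rw [capBound_eq_succ_add hj]
  omega

lemma map_min_cap {d k N : ℕ} {l : List ℕ} (h : N ≤ capBound d k l.length) :
    (cap d k l).map (min · N) = l.map (min · N) := by
  simp only [cap, List.map_map]
  exact List.map_congr_left fun a _ => by simp only [Function.comp_apply]; omega

lemma cap_of_length_eq {d k j : ℕ} {l : List ℕ} (h : l.length = j) :
    cap d k l = l.map (min · (capBound d k j)) := by
  rw [cap, h]

lemma cap_insertOne {d k : ℕ} {l : List ℕ} {i : ℕ} (hi : i ≤ l.length) (hl : l.length ≤ k) :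
    cap d k (insertOne l i) =
      (insertOne (cap d k l) i).map (min · (capBound d k (l.length + 1))) := by
  have hN : capBound d k (l.length + 1) ≤ capBound d k l.length := by
    rw [capBound_eq_succ_add hl]; omega
  rw [cap_of_length_eq (length_insertOne l hi)]
  simp only [insertOne, List.map_append, List.map_cons, List.map_take, List.map_drop,
    map_min_cap hN]

lemma cap_incrAt (d k : ℕ) (l : List ℕ) (j : ℕ) :
    cap d k (incrAt l j) = (incrAt (cap d k l) j).map (min · (capBound d k l.length)) := by
  rw [cap_of_length_eq (length_incrAt l j)]
  simp only [incrAt, getD_cap, List.map_set, map_min_cap le_rfl]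
  congr 1
  omega

lemma cap_splitAt {d k : ℕ} {l : List ℕ} {p : ℕ × ℕ} (hp : p.1 < l.length) (hs : p.2 < d)
    (hl : l.length ≤ k) :
    cap d k (splitAt l p) =
      (splitAt (cap d k l) p).map (min · (capBound d k (l.length + 1))) := by
  have := capBound_eq_succ_add (d := d) hl
  rw [cap_of_length_eq (length_splitAt l hp)]
  simp only [splitAt, getD_cap, List.map_append, List.map_cons, List.map_take, List.map_drop,
    map_min_cap (by omega : capBound d k (l.length + 1) ≤ capBound d k l.length)]
  congr 2
  omega

lemma min_getD_eq_of_cap_eq {d k : ℕ} {l l' : List ℕ} (hlen : l'.length = l.length)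
    (hcap : cap d k l = cap d k l') (i : ℕ) :
    min (l.getD i 0) (capBound d k l.length) = min (l'.getD i 0) (capBound d k l.length) := by
  rw [← getD_cap, hcap, getD_cap, hlen]

lemma insertPositions_eq_of_cap_eq {d k : ℕ} {l l' : List ℕ} (hlen : l'.length = l.length)
    (hcap : cap d k l = cap d k l') (hN : 2 ≤ capBound d k l.length) :
    insertPositions l = insertPositions l' := by
  ext i
  have := min_getD_eq_of_cap_eq hlen hcap (i - 1)
  simp only [mem_insertPositions, hlen]
  omega

lemma splitPositions_eq_of_cap_eq {d k : ℕ} {l l' : List ℕ} (hlen : l'.length = l.length)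
    (hcap : cap d k l = cap d k l') (hN : d ≤ capBound d k l.length) :
    splitPositions d l = splitPositions d l' := by
  ext p
  have := min_getD_eq_of_cap_eq hlen hcap p.1
  simp only [mem_splitPositions, hlen]
  omega

lemma chainCount_eq_of_cap_eq {d k : ℕ} (hd : 2 ≤ d) (m : ℕ) :
    ∀ {l l' : List ℕ}, l'.length = l.length → cap d k l = cap d k l' →
      chainCount d k l m = chainCount d k l' m := by
  induction m with
  | zero => intro l l' hlen _; rw [chainCount_zero, chainCount_zero, hlen]
  | succ m ih =>
    intro l l' hlen hcap
    rcases lt_or_ge k l.length with hk | hk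
    · rw [chainCount_eq_zero_of_lt_length hk, chainCount_eq_zero_of_lt_length (hlen ▸ hk)]
    have hN := le_capBound (d := d) hk
    rw [chainCount_succ, chainCount_succ, sum_upperCovers, sum_upperCovers,
      ← insertPositions_eq_of_cap_eq hlen hcap (by omega),
      ← splitPositions_eq_of_cap_eq hlen hcap hN, hlen]
    congr 1; congr 1
    · refine Finset.sum_congr rfl fun i hi => ih ?_ ?_
      all_goals have hi := (mem_insertPositions.1 hi).1
      · rw [length_insertOne l hi, length_insertOne l' (by omega), hlen]
      · rw [cap_insertOne hi hk, cap_insertOne (by omega) (by omega), hcap, hlen]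
    · exact Finset.sum_congr rfl fun j _ => ih (by rw [length_incrAt, length_incrAt, hlen])
        (by rw [cap_incrAt, cap_incrAt, hcap, hlen])
    · refine Finset.sum_congr rfl fun p hp => ih ?_ ?_
      all_goals obtain ⟨hp, -, hs, -⟩ := mem_splitPositions.1 hp
      · rw [length_splitAt l hp, length_splitAt l' (by omega), hlen]
      · rw [cap_splitAt hp (by omega) hk, cap_splitAt (by omega) (by omega) (by omega), hcap, hlen]

lemma chainCount_cap {d : ℕ} (hd : 2 ≤ d) (k : ℕ) (l : List ℕ) (m : ℕ) :
    chainCount d k (cap d k l) m = chainCount d k l m :=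
  (chainCount_eq_of_cap_eq hd m (length_cap d k l) (cap_cap d k l).symm).symm

/-! ### The transfer recursion on capped compositions -/

open PowerSeries

noncomputable def chainSeries (d k : ℕ) (l : List ℕ) : ℤ⟦X⟧ :=
  PowerSeries.mk fun m => (chainCount d k l m : ℤ)

def loopCovers (d k : ℕ) (s : List ℕ) : Finset (List ℕ) :=
  (upperCovers d s).filter (cap d k · = s)

def exitCovers (d k : ℕ) (s : List ℕ) : Finset (List ℕ) :=
  (upperCovers d s).filter (cap d k · ≠ s)

lemma chainSeries_cap {d : ℕ} (hd : 2 ≤ d) (k : ℕ) (l : List ℕ) :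
    chainSeries d k (cap d k l) = chainSeries d k l := by
  ext m
  simp only [chainSeries, coeff_mk, chainCount_cap hd]

lemma chainSeries_eq_zero_of_lt_length {d k : ℕ} {l : List ℕ} (h : k < l.length) :
    chainSeries d k l = 0 := by
  ext m
  simp [chainSeries, chainCount_eq_zero_of_lt_length h]

lemma chainCount_succ_eq {d : ℕ} (hd : 2 ≤ d) (k : ℕ) (s : List ℕ) (m : ℕ) :
    chainCount d k s (m + 1) = (loopCovers d k s).card * chainCount d k s m +
      ∑ γ ∈ exitCovers d k s, chainCount d k (cap d k γ) m := by
  rw [chainCount_succ, ← Finset.sum_filter_add_sum_filter_not _ (cap d k · = s)]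
  congr 1
  · rw [Finset.sum_congr rfl fun γ hγ => by
      rw [← chainCount_cap hd k γ m, (Finset.mem_filter.1 hγ).2], Finset.sum_const, smul_eq_mul,
      loopCovers]
  · exact Finset.sum_congr rfl fun γ _ => (chainCount_cap hd k γ m).symm

lemma one_sub_mul_chainSeries {d : ℕ} (hd : 2 ≤ d) (k : ℕ) (s : List ℕ) :
    (1 - ((loopCovers d k s).card : ℤ⟦X⟧) * X) * chainSeries d k s =
      C (if s.length = k then 1 else 0) +
        X * ∑ γ ∈ exitCovers d k s, chainSeries d k (cap d k γ) := by
  suffices chainSeries d k s = C (if s.length = k then 1 else 0) +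
      X * (((loopCovers d k s).card : ℤ⟦X⟧) * chainSeries d k s +
        ∑ γ ∈ exitCovers d k s, chainSeries d k (cap d k γ)) by
    linear_combination this
  ext n
  cases n with
  | zero =>
    simp only [chainSeries, coeff_mk, chainCount_zero, map_add, coeff_C, coeff_zero_X_mul]
    split_ifs <;> simp
  | succ m =>
    simp only [chainSeries, coeff_mk, chainCount_succ_eq hd, map_add, coeff_C, coeff_succ_X_mul,
      map_sum, ← map_natCast (C (R := ℤ)), coeff_C_mul]
    push_cast
    simp

lemma loopCovers_subset_image_incrAt (d k : ℕ) (s : List ℕ) :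
    loopCovers d k s ⊆ (Finset.range s.length).image (incrAt s) := by
  intro γ hγ
  obtain ⟨hγ, hcap⟩ := Finset.mem_filter.1 hγ
  obtain ⟨j, hj, rfl⟩ := exists_eq_incrAt_of_mem_upperCovers hγ
    (by rw [← length_cap d k γ, hcap])
  exact Finset.mem_image_of_mem _ (Finset.mem_range.2 hj)

lemma card_loopCovers_le (d k : ℕ) (s : List ℕ) : (loopCovers d k s).card ≤ s.length :=
  (Finset.card_le_card (loopCovers_subset_image_incrAt d k s)).trans
    (Finset.card_image_le.trans (Finset.card_range _).le)

lemma length_lt_of_mem_exitCovers {d k : ℕ} {s γ : List ℕ}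
    (hloop : (loopCovers d k s).card = s.length) (hγ : γ ∈ exitCovers d k s) :
    s.length < γ.length := by
  obtain ⟨hγ, hcap⟩ := Finset.mem_filter.1 hγ
  have heq := Finset.eq_of_subset_of_card_le (loopCovers_subset_image_incrAt d k s)
    (Finset.card_image_le.trans (by rw [Finset.card_range, hloop]))
  rcases length_of_mem_upperCovers hγ with hlen | hlen
  · obtain ⟨j, hj, rfl⟩ := exists_eq_incrAt_of_mem_upperCovers hγ hlen
    have hmem : incrAt s j ∈ loopCovers d k s := heq ▸ Finset.mem_image_of_mem _
      (Finset.mem_range.2 hj)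
    exact absurd (Finset.mem_filter.1 hmem).2 hcap
  · omega

/-- Lexicographic in the number `k + 1 - s.length` of missing parts and in the total deficit of
the parts below the cap: the weight of the first component exceeds every possible deficit. -/
def capRank (d k : ℕ) (s : List ℕ) : ℕ :=
  (k + 1 - s.length) * ((k + 1) * capBound d k 0 + 1) + (s.map (capBound d k s.length - ·)).sum

lemma sum_map_set_add (f : ℕ → ℕ) {l : List ℕ} {j : ℕ} (hj : j < l.length) (v : ℕ) :
    ((l.set j v).map f).sum + f (l.getD j 0) = (l.map f).sum + f v := by
  rw [set_eq_take_append_cons_drop l hj v]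
  conv_rhs => rw [← take_append_getD_cons_drop l hj]
  simp only [List.map_append, List.map_cons, List.sum_append, List.sum_cons]
  omega

lemma capRank_incrAt_lt {d k : ℕ} {s : List ℕ} (hcap : cap d k s = s) {j : ℕ}
    (hj : j < s.length) (hne : cap d k (incrAt s j) ≠ s) :
    capRank d k (cap d k (incrAt s j)) < capRank d k s := by
  have hle : s.getD j 0 ≤ capBound d k s.length := by
    have := getD_cap d k s j
    rw [hcap] at this
    omega
  have hset : cap d k (incrAt s j) = s.set j (min (s.getD j 0 + 1) (capBound d k s.length)) := by
    rw [cap_incrAt, hcap, incrAt, List.map_set, ← cap_of_length_eq (d := d) (k := k) rfl, hcap]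
  have hlt : s.getD j 0 < capBound d k s.length := by
    refine lt_of_le_of_ne hle fun h => hne ?_
    rw [hset, ← h, min_eq_right (Nat.le_succ _), List.getD_eq_getElem _ _ hj,
      List.set_getElem_self]
  have := sum_map_set_add (capBound d k s.length - ·) hj (s.getD j 0 + 1)
  rw [hset, min_eq_left hlt, capRank, capRank, List.length_set]
  omega

lemma sum_map_sub_le (N : ℕ) (l : List ℕ) : (l.map (N - ·)).sum ≤ l.length * N := by
  simpa using List.sum_le_card_nsmul (l.map (N - ·)) N (by simp)

lemma capRank_lt_of_mem_exitCovers {d k : ℕ} {s γ : List ℕ} (hcap : cap d k s = s)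
    (hγ : γ ∈ exitCovers d k s) (hγk : γ.length ≤ k) :
    capRank d k (cap d k γ) < capRank d k s := by
  obtain ⟨hγ, hne⟩ := Finset.mem_filter.1 hγ
  rcases length_of_mem_upperCovers hγ with hlen | hlen
  · obtain ⟨j, hj, rfl⟩ := exists_eq_incrAt_of_mem_upperCovers hγ hlen
    exact capRank_incrAt_lt hcap hj hne
  · have hdef := sum_map_sub_le (capBound d k (s.length + 1)) (cap d k γ)
    have hN : capBound d k (s.length + 1) ≤ capBound d k 0 :=
      Nat.mul_le_mul_left _ (by omega)
    have hW : (s.length + 1) * capBound d k (s.length + 1) ≤ (k + 1) * capBound d k 0 :=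
      Nat.mul_le_mul (by omega) hN
    rw [capRank, capRank, length_cap, hlen, show k + 1 - s.length = k + 1 - (s.length + 1) + 1
      by omega, add_one_mul (k + 1 - (s.length + 1))]
    rw [length_cap, hlen] at hdef
    omega

/-! ### Rationality -/

noncomputable def denomProd (k : ℕ) (c : ℕ → ℕ) : ℤ⟦X⟧ :=
  ∏ i ∈ Finset.Icc 1 k, (1 - (i : ℤ⟦X⟧) * X) ^ c i

noncomputable abbrev polynomialSubring : Subring ℤ⟦X⟧ :=
  (Polynomial.coeToPowerSeries.ringHom (R := ℤ)).range

def HasDenom (k : ℕ) (F : ℤ⟦X⟧) : Prop :=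
  ∃ c : ℕ → ℕ, c k = 1 ∧ F * denomProd k c ∈ polynomialSubring

lemma C_mem_polynomialSubring (z : ℤ) : C z ∈ polynomialSubring :=
  ⟨Polynomial.C z, by simp⟩

lemma X_mem_polynomialSubring : (X : ℤ⟦X⟧) ∈ polynomialSubring :=
  ⟨Polynomial.X, by simp⟩

lemma denomProd_mem_polynomialSubring (k : ℕ) (c : ℕ → ℕ) :
    denomProd k c ∈ polynomialSubring :=
  prod_mem fun i _ => pow_mem (sub_mem (one_mem _)
    (mul_mem (natCast_mem _ i) X_mem_polynomialSubring)) _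

lemma denomProd_eq_mul_of_le {k : ℕ} {c c' : ℕ → ℕ} (h : ∀ i, c i ≤ c' i) :
    denomProd k c' = denomProd k c * denomProd k (fun i => c' i - c i) := by
  simp only [denomProd, ← Finset.prod_mul_distrib, ← pow_add]
  exact Finset.prod_congr rfl fun i _ => by rw [Nat.add_sub_cancel' (h i)]

lemma denomProd_add_single {k m : ℕ} (hm : m ≤ k) (c : ℕ → ℕ) :
    denomProd k (c + Pi.single m 1) = (1 - (m : ℤ⟦X⟧) * X) * denomProd k c := by
  rcases Nat.eq_zero_or_pos m with rfl | hm0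
  · have h0 : (0 : ℕ) ∉ Finset.Icc 1 k := by simp
    simp only [Nat.cast_zero, zero_mul, sub_zero, one_mul, denomProd]
    exact Finset.prod_congr rfl fun i hi => by
      rw [Pi.add_apply, Pi.single_eq_of_ne (ne_of_mem_of_not_mem hi h0), add_zero]
  · have hmem : m ∈ Finset.Icc 1 k := Finset.mem_Icc.2 ⟨hm0, hm⟩
    have hsingle : ∏ i ∈ Finset.Icc 1 k, (1 - (i : ℤ⟦X⟧) * X) ^ Pi.single m 1 i =
        1 - (m : ℤ⟦X⟧) * X := by
      rw [Finset.prod_eq_single_of_mem m hmem fun i _ hi => by rw [Pi.single_eq_of_ne hi,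
        pow_zero], Pi.single_eq_same, pow_one]
    simp only [denomProd, Pi.add_apply, pow_add, Finset.prod_mul_distrib, hsingle, mul_comm]

lemma hasDenom_of_mem {k : ℕ} {F : ℤ⟦X⟧} (hF : F ∈ polynomialSubring) : HasDenom k F :=
  ⟨Pi.single k 1, Pi.single_eq_same _ _, mul_mem hF (denomProd_mem_polynomialSubring _ _)⟩

lemma HasDenom.add {k : ℕ} {F G : ℤ⟦X⟧} (hF : HasDenom k F) (hG : HasDenom k G) :
    HasDenom k (F + G) := by
  obtain ⟨c, hc, hFc⟩ := hF
  obtain ⟨c', hc', hGc'⟩ := hG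
  refine ⟨c ⊔ c', by simp [hc, hc'], add_mul F G _ ▸ add_mem ?_ ?_⟩
  · rw [denomProd_eq_mul_of_le (c' := c ⊔ c') fun i => le_sup_left, ← mul_assoc]
    exact mul_mem hFc (denomProd_mem_polynomialSubring _ _)
  · rw [denomProd_eq_mul_of_le (c' := c ⊔ c') fun i => le_sup_right, ← mul_assoc]
    exact mul_mem hGc' (denomProd_mem_polynomialSubring _ _)

lemma HasDenom.sum {k : ℕ} {ι : Type*} {s : Finset ι} {F : ι → ℤ⟦X⟧}
    (h : ∀ i ∈ s, HasDenom k (F i)) : HasDenom k (∑ i ∈ s, F i) := by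
  classical
  induction s using Finset.induction_on with
  | empty => exact hasDenom_of_mem (zero_mem _)
  | insert a s ha ih =>
    rw [Finset.sum_insert ha]
    exact (h a (Finset.mem_insert_self a s)).add (ih fun i hi => h i (Finset.mem_insert_of_mem hi))

lemma HasDenom.mul_left {k : ℕ} {P F : ℤ⟦X⟧} (hP : P ∈ polynomialSubring) (hF : HasDenom k F) :
    HasDenom k (P * F) := by
  obtain ⟨c, hc, hFc⟩ := hF
  exact ⟨c, hc, mul_assoc P F _ ▸ mul_mem hP hFc⟩

lemma HasDenom.of_one_sub_mul {k m : ℕ} (hm : m < k) {F : ℤ⟦X⟧}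
    (h : HasDenom k ((1 - (m : ℤ⟦X⟧) * X) * F)) : HasDenom k F := by
  obtain ⟨c, hc, hFc⟩ := h
  refine ⟨c + Pi.single m 1, by simp [hc, hm.ne'], ?_⟩
  rw [denomProd_add_single hm.le, mul_left_comm, ← mul_assoc]
  exact hFc

lemma hasDenom_of_one_sub_mul_mem {k : ℕ} {F : ℤ⟦X⟧}
    (h : (1 - (k : ℤ⟦X⟧) * X) * F ∈ polynomialSubring) : HasDenom k F := by
  refine ⟨0 + Pi.single k 1, by simp, ?_⟩
  rw [denomProd_add_single le_rfl, mul_left_comm, ← mul_assoc]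
  exact mul_mem h (denomProd_mem_polynomialSubring _ _)

theorem hasDenom_chainSeries {d k : ℕ} (hd : 2 ≤ d) {s : List ℕ} (hcap : cap d k s = s)
    (hs : s.length ≤ k) : HasDenom k (chainSeries d k s) := by
  induction hr : capRank d k s using Nat.strong_induction_on generalizing s with
  | _ r ih =>
  have hexit : ∀ γ ∈ exitCovers d k s, HasDenom k (chainSeries d k (cap d k γ)) := by
    intro γ hγ
    rcases le_or_gt γ.length k with hγk | hγk
    · exact ih _ (hr ▸ capRank_lt_of_mem_exitCovers hcap hγ hγk) (cap_cap d k γ)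
        (by rwa [length_cap]) rfl
    · rw [chainSeries_eq_zero_of_lt_length (by rwa [length_cap])]
      exact hasDenom_of_mem (zero_mem _)
  have hrec := one_sub_mul_chainSeries hd k s
  rcases ((card_loopCovers_le d k s).trans hs).lt_or_eq with hlt | heq
  · refine HasDenom.of_one_sub_mul hlt ?_
    rw [hrec]
    exact (hasDenom_of_mem (C_mem_polynomialSubring _)).add
      ((HasDenom.sum hexit).mul_left X_mem_polynomialSubring)
  · have hloop : (loopCovers d k s).card = s.length :=
      le_antisymm (card_loopCovers_le d k s) (by omega)
    have hzero : ∀ γ ∈ exitCovers d k s, chainSeries d k (cap d k γ) = 0 := fun γ hγ =>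
      chainSeries_eq_zero_of_lt_length (by
        rw [length_cap]; have := length_lt_of_mem_exitCovers hloop hγ; omega)
    rw [heq, Finset.sum_eq_zero hzero, mul_zero, add_zero] at hrec
    exact hasDenom_of_one_sub_mul_mem (hrec ▸ C_mem_polynomialSubring _)

lemma chainsTo_eq_empty_of_lt_sum {d k n : ℕ} {l : List ℕ} (h : n < l.sum) :
    chainsTo d k l n = ∅ := by
  rw [chainsTo, dif_pos h.le, if_neg fun h' => h.ne h'.1]

lemma Lser_eq_X_pow_mul (d k : ℕ) (α : List ℕ) :
    Lser (coverS d) α k = X ^ α.sum * chainSeries d k α := by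
  ext n
  rw [Lser, coeff_mk, coeff_X_pow_mul', ank_eq_card_chainsTo]
  split_ifs with h
  · rw [chainSeries, coeff_mk, chainCount, Nat.add_sub_cancel' h]
  · rw [chainsTo_eq_empty_of_lt_sum (by omega), Finset.card_empty, Nat.cast_zero]

theorem exists_Lser_mul_denomProd_eq {d k : ℕ} (hd : 2 ≤ d) {α : List ℕ} (hα : α.length ≤ k) :
    ∃ c : ℕ → ℕ, c k = 1 ∧ ∃ p : Polynomial ℤ, Lser (coverS d) α k * denomProd k c = p := by
  obtain ⟨c, hc, p, hp⟩ := hasDenom_chainSeries hd (cap_cap d k α) (by rwa [length_cap])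
  rw [chainSeries_cap hd] at hp
  refine ⟨c, hc, Polynomial.X ^ α.sum * p, ?_⟩
  rw [Lser_eq_X_pow_mul, mul_assoc, ← hp, Polynomial.coeToPowerSeries.ringHom_apply,
    Polynomial.coe_mul, Polynomial.coe_pow, Polynomial.coe_X]

/-! ### Growth of the chain counts -/

def CoeffGrowth (ρ : ℝ) (F : ℤ⟦X⟧) : Prop :=
  ∃ C : ℝ, ∃ M : ℕ, ∀ n, |((coeff n F : ℤ) : ℝ)| ≤ C * (n + 1) ^ M * ρ ^ n

lemma coeffGrowth_coe {ρ : ℝ} (hρ : 0 < ρ) (p : Polynomial ℤ) : CoeffGrowth ρ p := by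
  set C := ∑ j ∈ Finset.range (p.natDegree + 1), |(p.coeff j : ℝ)| / ρ ^ j
  have hC : 0 ≤ C := Finset.sum_nonneg fun j _ => by positivity
  refine ⟨C, 0, fun n => ?_⟩
  rw [Polynomial.coeff_coe, pow_zero, mul_one]
  rcases le_or_gt n p.natDegree with h | h
  · calc |(p.coeff n : ℝ)| = |(p.coeff n : ℝ)| / ρ ^ n * ρ ^ n := by field_simp
      _ ≤ C * ρ ^ n := by
        gcongr
        exact Finset.single_le_sum (f := fun j => |(p.coeff j : ℝ)| / ρ ^ j)
          (fun j _ => by positivity) (Finset.mem_range.2 (by omega))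
  · rw [p.coeff_eq_zero_of_natDegree_lt h, Int.cast_zero, abs_zero]
    positivity

lemma one_sub_mul_mk_pow (a : ℕ) : (1 - (a : ℤ⟦X⟧) * X) * mk (fun n => (a : ℤ) ^ n) = 1 := by
  have h := congrArg (rescale (a : ℤ)) (mk_one_mul_one_sub_eq_one (S := ℤ))
  simp only [map_mul, rescale_mk, Pi.one_apply, mul_one, map_sub, map_one, rescale_X] at h
  rwa [map_natCast, mul_comm] at h

lemma CoeffGrowth.of_mul_one_sub {ρ : ℝ} {i : ℕ} (hi : (i : ℝ) ≤ ρ) {B : ℤ⟦X⟧}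
    (h : CoeffGrowth ρ (B * (1 - (i : ℤ⟦X⟧) * X))) : CoeffGrowth ρ B := by
  obtain ⟨C, M, hC⟩ := h
  set F := B * (1 - (i : ℤ⟦X⟧) * X)
  have hB : B = F * mk fun n => (i : ℤ) ^ n := by rw [mul_assoc, one_sub_mul_mk_pow, mul_one]
  have hC0 : 0 ≤ C := by simpa using (abs_nonneg _).trans (hC 0)
  have hρ : 0 ≤ ρ := (Nat.cast_nonneg i).trans hi
  refine ⟨C, M + 1, fun n => ?_⟩
  have hterm : ∀ j ∈ Finset.range (n + 1),
      |((coeff j F : ℤ) : ℝ)| * (i : ℝ) ^ (n - j) ≤ C * (n + 1) ^ M * ρ ^ n := by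
    intro j hj
    have hjn : j ≤ n := Nat.lt_succ_iff.1 (Finset.mem_range.1 hj)
    calc |((coeff j F : ℤ) : ℝ)| * (i : ℝ) ^ (n - j)
        ≤ C * (j + 1) ^ M * ρ ^ j * ρ ^ (n - j) := by gcongr; exact hC j
      _ ≤ C * (n + 1) ^ M * ρ ^ n := by
        rw [mul_assoc, ← pow_add, Nat.add_sub_cancel' hjn]
        gcongr
  calc |((coeff n B : ℤ) : ℝ)|
      = |∑ j ∈ Finset.range (n + 1), ((coeff j F : ℤ) : ℝ) * (i : ℝ) ^ (n - j)| := by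
        rw [hB, coeff_mul, Finset.Nat.sum_antidiagonal_eq_sum_range_succ
          (fun a b => coeff a F * coeff b (mk fun n => (i : ℤ) ^ n))]
        push_cast [coeff_mk]
        rfl
    _ ≤ ∑ j ∈ Finset.range (n + 1), |((coeff j F : ℤ) : ℝ)| * (i : ℝ) ^ (n - j) := by
        refine (Finset.abs_sum_le_sum_abs _ _).trans_eq (Finset.sum_congr rfl fun j _ => ?_)
        rw [abs_mul, abs_of_nonneg (a := (i : ℝ) ^ (n - j)) (by positivity)]
    _ ≤ ∑ j ∈ Finset.range (n + 1), C * (n + 1) ^ M * ρ ^ n := Finset.sum_le_sum hterm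
    _ = C * (n + 1) ^ (M + 1) * ρ ^ n := by
        rw [Finset.sum_const, Finset.card_range, nsmul_eq_mul]
        push_cast
        ring

lemma CoeffGrowth.of_mul_one_sub_pow {ρ : ℝ} {i : ℕ} (hi : (i : ℝ) ≤ ρ) (e : ℕ) {B : ℤ⟦X⟧}
    (h : CoeffGrowth ρ (B * (1 - (i : ℤ⟦X⟧) * X) ^ e)) : CoeffGrowth ρ B := by
  induction e generalizing B with
  | zero => simpa using h
  | succ e ih =>
    rw [pow_succ', ← mul_assoc] at h
    exact (ih h).of_mul_one_sub hi

lemma CoeffGrowth.of_mul_prod {ρ : ℝ} {S : Finset ℕ} (hS : ∀ i ∈ S, (i : ℝ) ≤ ρ) (c : ℕ → ℕ)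
    {B : ℤ⟦X⟧} (h : CoeffGrowth ρ (B * ∏ i ∈ S, (1 - (i : ℤ⟦X⟧) * X) ^ c i)) :
    CoeffGrowth ρ B := by
  induction S using Finset.induction_on generalizing B with
  | empty => simpa using h
  | insert a S ha ih =>
    rw [Finset.prod_insert ha, ← mul_assoc] at h
    exact (ih (fun i hi => hS i (Finset.mem_insert_of_mem hi)) h).of_mul_one_sub_pow
      (hS a (Finset.mem_insert_self a S)) (c a)

lemma summable_mul_add_one_pow_mul_pow (C : ℝ) (M : ℕ) {r : ℝ} (hr0 : 0 < r) (hr1 : r < 1) :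
    Summable fun n : ℕ => C * (n + 1) ^ M * r ^ n := by
  have h : Summable fun n : ℕ => (n : ℝ) ^ M * r ^ n :=
    summable_pow_mul_geometric_of_norm_lt_one M (by rwa [Real.norm_eq_abs, abs_of_pos hr0])
  refine (((summable_nat_add_iff 1).2 h).mul_left (C / r)).congr fun n => ?_
  simp only [Nat.cast_add, Nat.cast_one, pow_succ]
  field_simp

lemma CoeffGrowth.summable_div_pow {ρ k : ℝ} (hρ : 0 < ρ) (hρk : ρ < k) {F : ℤ⟦X⟧}
    (h : CoeffGrowth ρ F) : Summable fun n => ((coeff n F : ℤ) : ℝ) / k ^ n := by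
  obtain ⟨C, M, hC⟩ := h
  have hk : 0 < k := hρ.trans hρk
  refine Summable.of_norm_bounded (summable_mul_add_one_pow_mul_pow C M (div_pos hρ hk)
    ((div_lt_one hk).2 hρk)) fun n => ?_
  rw [Real.norm_eq_abs, abs_div, abs_of_pos (pow_pos hk n), div_le_iff₀ (pow_pos hk n), div_pow,
    mul_assoc, div_mul_cancel₀ _ (pow_pos hk n).ne']
  exact hC n

lemma append_incrAt_mem_chainsTo {d k n : ℕ} {α Q : List ℕ} {c : List (List ℕ)}
    (hc : c ∈ chainsTo d k α n) (hQ : c.getLast? = some Q) {i : ℕ} (hi : i < k) :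
    c ++ [incrAt Q i] ∈ chainsTo d k α (n + 1) := by
  obtain ⟨hch, hh, Q', hQ', hQs, hQl⟩ := mem_chainsTo.1 hc
  obtain rfl : Q' = Q := Option.some.inj (hQ'.symm.trans hQ)
  refine mem_chainsTo.2 ⟨List.isChain_append.2 ⟨hch, List.isChain_singleton _, ?_⟩,
    by rw [List.head?_append, hh, Option.some_or], incrAt Q' i, List.getLast?_concat,
    by rw [sum_incrAt Q' (by omega), hQs], by rw [length_incrAt, hQl]⟩
  intro x hx y hy
  rw [hQ', Option.mem_some_iff] at hx
  rw [List.head?_singleton, Option.mem_some_iff] at hy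
  subst hx hy
  exact Or.inr (Or.inl ⟨i, by omega, rfl⟩)

lemma mul_ank_le_ank_succ (d k : ℕ) (α : List ℕ) (n : ℕ) :
    k * ank (coverS d) α n k ≤ ank (coverS d) α (n + 1) k := by
  rw [ank_eq_card_chainsTo, ank_eq_card_chainsTo]
  calc k * (chainsTo d k α n).card = (Finset.range k ×ˢ chainsTo d k α n).card := by
        rw [Finset.card_product, Finset.card_range]
    _ ≤ _ := ?_
  refine Finset.card_le_card_of_injOn (fun q => q.2 ++ [incrAt (q.2.getLast?.getD []) q.1])
    (fun q hq => ?_) fun q hq q' hq' h => ?_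
  · obtain ⟨hi, hc⟩ := Finset.mem_product.1 hq
    obtain ⟨-, -, Q, hQ, -⟩ := mem_chainsTo.1 hc
    simpa [hQ] using append_incrAt_mem_chainsTo hc hQ (Finset.mem_range.1 hi)
  · obtain ⟨hi, hc⟩ := Finset.mem_product.1 hq
    obtain ⟨hi', -⟩ := Finset.mem_product.1 hq'
    obtain ⟨hc_eq, h⟩ := List.append_inj' h rfl
    obtain ⟨-, -, Q, hQ, -, hQl⟩ := mem_chainsTo.1 hc
    rw [← hc_eq, hQ, Option.getD_some, List.singleton_inj] at h
    refine Prod.ext (incrAt_injOn Q ?_ ?_ h) hc_eq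
    · simpa [hQl] using hi
    · simpa [hQl] using hi'

lemma chainCount_pos (d : ℕ) {k : ℕ} {l : List ℕ} (hl : l.length ≤ k) :
    0 < chainCount d k l (k - l.length) := by
  induction h : k - l.length generalizing l with
  | zero => rw [chainCount_zero, if_pos (by omega)]; exact one_pos
  | succ j ih =>
    have hmem : insertOne l 0 ∈ upperCovers d l :=
      mem_upperCovers.2 (Or.inl ⟨0, Nat.zero_le _, rfl⟩)
    have hlen := length_insertOne l (Nat.zero_le _)
    rw [chainCount_succ]
    exact (ih (by omega) (by omega)).trans_le
      (Finset.single_le_sum (f := fun γ => chainCount d k γ j) (fun _ _ => Nat.zero_le _) hmem)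

lemma ank_pos (d : ℕ) {k : ℕ} {α : List ℕ} (hα : α.length ≤ k) :
    0 < ank (coverS d) α (α.sum + (k - α.length)) k := by
  rw [ank_eq_card_chainsTo]
  exact chainCount_pos d hα

lemma tendsto_of_summable_succ_sub {u : ℕ → ℝ} (h : Summable fun n => u (n + 1) - u n) :
    Filter.Tendsto u Filter.atTop (nhds (u 0 + ∑' n, (u (n + 1) - u n))) :=
  (tendsto_const_nhds.add h.hasSum.tendsto_sum_nat).congr fun n => by
    rw [Finset.sum_range_sub, add_sub_cancel]

lemma exists_pos_tendsto_div_pow {a : ℕ → ℕ} {k : ℕ} (hk : 0 < k)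
    (hmono : ∀ n, k * a n ≤ a (n + 1)) {n₀ : ℕ} (hpos : 0 < a n₀)
    (hsum : Summable fun n => ((a (n + 1) : ℝ) - k * a n) / (k : ℝ) ^ (n + 1)) :
    ∃ C : ℝ, 0 < C ∧ Filter.Tendsto (fun n => (a n : ℝ) / (k : ℝ) ^ n) Filter.atTop (nhds C) := by
  have hkR : (0 : ℝ) < k := by exact_mod_cast hk
  have hinc : ∀ n, (a (n + 1) : ℝ) / (k : ℝ) ^ (n + 1) - (a n : ℝ) / (k : ℝ) ^ n =
      ((a (n + 1) : ℝ) - k * a n) / (k : ℝ) ^ (n + 1) := fun n => by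
    field_simp
    ring
  have hlim := tendsto_of_summable_succ_sub (u := fun n => (a n : ℝ) / (k : ℝ) ^ n)
    (by simpa only [hinc] using hsum)
  have hmono' : Monotone fun n => (a n : ℝ) / (k : ℝ) ^ n := monotone_nat_of_le_succ fun n => by
    rw [← sub_nonneg, hinc]
    exact div_nonneg (sub_nonneg.2 (by exact_mod_cast hmono n)) (by positivity)
  exact ⟨_, (by positivity : (0 : ℝ) < a n₀ / k ^ n₀).trans_le (hmono'.ge_of_tendsto hlim n₀),
    hlim⟩

lemma coeff_succ_mul_one_sub (F : ℤ⟦X⟧) (a n : ℕ) :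
    coeff (n + 1) (F * (1 - (a : ℤ⟦X⟧) * X)) = coeff (n + 1) F - a * coeff n F := by
  rw [mul_sub, mul_one, map_sub, ← mul_assoc, coeff_succ_mul_X, ← map_natCast C, mul_comm,
    coeff_C_mul]

lemma denomProd_eq_one_sub_mul {k : ℕ} (hk : 1 ≤ k) {c : ℕ → ℕ} (hc : c k = 1) :
    denomProd k c =
      (1 - (k : ℤ⟦X⟧) * X) * ∏ i ∈ Finset.Icc 1 (k - 1), (1 - (i : ℤ⟦X⟧) * X) ^ c i := by
  obtain ⟨j, rfl⟩ : ∃ j, k = j + 1 := ⟨k - 1, by omega⟩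
  rw [denomProd, Finset.prod_Icc_succ_top (by omega), hc, pow_one, mul_comm, Nat.add_sub_cancel]

theorem exists_pos_tendsto_ank_div_pow {d k : ℕ} (hd : 2 ≤ d) {α : List ℕ} (hα : α.length ≤ k)
    (hk : 1 ≤ k) :
    ∃ C : ℝ, 0 < C ∧ Filter.Tendsto (fun n => (ank (coverS d) α n k : ℝ) / (k : ℝ) ^ n)
      Filter.atTop (nhds C) := by
  have hkR : (1 : ℝ) ≤ k := by exact_mod_cast hk
  -- a growth base must be positive, at least every `i < k` and below `k`
  have hgrowth : CoeffGrowth (k - 1 / 2) (Lser (coverS d) α k * (1 - (k : ℤ⟦X⟧) * X)) := by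
    obtain ⟨c, hc, p, hp⟩ := exists_Lser_mul_denomProd_eq hd hα
    refine CoeffGrowth.of_mul_prod (S := Finset.Icc 1 (k - 1)) (fun i hi => ?_) c ?_
    · have : (i : ℝ) ≤ (k - 1 : ℕ) := by exact_mod_cast (Finset.mem_Icc.1 hi).2
      rw [Nat.cast_sub hk, Nat.cast_one] at this
      linarith
    · rw [mul_assoc, ← denomProd_eq_one_sub_mul hk hc, hp]
      exact coeffGrowth_coe (by linarith) p
  refine exists_pos_tendsto_div_pow hk (mul_ank_le_ank_succ d k α) (ank_pos d hα) ?_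
  have hsum := hgrowth.summable_div_pow (k := k) (by linarith) (by linarith)
  refine ((summable_nat_add_iff 1).2 hsum).congr fun n => ?_
  rw [coeff_succ_mul_one_sub, Lser, coeff_mk, coeff_mk]
  push_cast
  rfl

end CompositionPoset

open PowerSeries in
theorem stmt18_general (d : ℕ) (hd : 2 ≤ d) (α : List ℕ) (r : ℕ)
    (hr : α.length = r) (k : ℕ) (hk : r ≤ k) (hk1 : 1 ≤ k) :
    (∃ c : ℕ → ℕ, c k = 1 ∧ ∃ p : Polynomial ℤ,
      Lser (coverS d) α k *
          ∏ i ∈ Finset.Icc 1 k, (1 - (i : PowerSeries ℤ) * X) ^ c i =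
        (p : PowerSeries ℤ)) ∧
    (∃ C : ℝ, 0 < C ∧
      Filter.Tendsto (fun n => (ank (coverS d) α n k : ℝ) / (k : ℝ) ^ n)
        Filter.atTop (nhds C)) := by
  have hαk : α.length ≤ k := hr ▸ hk
  exact ⟨CompositionPoset.exists_Lser_mul_denomProd_eq hd hαk,
    CompositionPoset.exists_pos_tendsto_ank_div_pow hd hαk hk1⟩

open PowerSeries in
theorem stmt18 (d : ℕ) (hd : 2 ≤ d) (α : List ℕ) (hα : IsComposition α) (r : ℕ)
    (hr : α.length = r) (k : ℕ) (hk : r ≤ k) (hk1 : 1 ≤ k) :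
    (∃ c : ℕ → ℕ, c k = 1 ∧ ∃ p : Polynomial ℤ,
      Lser (coverS d) α k *
          ∏ i ∈ Finset.Icc 1 k, (1 - (i : PowerSeries ℤ) * X) ^ c i =
        (p : PowerSeries ℤ)) ∧
    (∃ C : ℝ, 0 < C ∧
      Filter.Tendsto (fun n => (ank (coverS d) α n k : ℝ) / (k : ℝ) ^ n)
        Filter.atTop (nhds C)) :=
  stmt18_general d hd α r hr k hk hk1
end

section
/- Let α be a composition of n and let π be a permutation of {1,…,n} whose descent set equals S_α = {α_1, α_1+α_2, …, α_1+⋯+α_{r−1}}. For each of the n+1 positions at which a new letter 0 can be inserted into the one-line representation of π, let τ be the resulting word on {0,1,…,n} and let β(τ) be the composition of n+1 corresponding under the bijection β ↦ S_β to the descent set of τ. Then the set of compositions β(τ) obtained from the n+1 insertions is exactly the set of compositions that cover α in the poset 𝔖^∞. -/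
/-- Covering relation of the poset 𝔖^∞: insert a part 1 at any position,
increase one part by 1, or replace a part `q` by the two adjacent parts
`(q − s + 1, s)` for some `s ≥ 2` with `q − s + 1 ≥ 2`. -/
def coverSInf (P Q : List ℕ) : Prop :=
  (∃ i, i ≤ P.length ∧ Q = P.take i ++ 1 :: P.drop i) ∨
  (∃ j, j < P.length ∧ Q = P.set j (P.getD j 0 + 1)) ∨
  (∃ j, j < P.length ∧ ∃ s, 2 ≤ s ∧ 2 ≤ P.getD j 0 - s + 1 ∧
    Q = P.take j ++ (P.getD j 0 - s + 1) :: s :: P.drop (j + 1))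

/-- The subset `S_α = {α_1, α_1+α_2, …, α_1+⋯+α_{r−1}}` of `{1,…,n−1}` associated
to a composition `α = (α_1,…,α_r)` of `n`. -/
def Sset (α : List ℕ) : Set ℕ :=
  {s | ∃ t, 1 ≤ t ∧ t < α.length ∧ s = (α.take t).sum}

/-- The descent set of a word `w_1 w_2 ⋯ w_m` of distinct integers:
`{i : w_i > w_{i+1}}` (positions are 1-based). -/
def descentSet (w : List ℕ) : Set ℕ :=
  {i | 1 ≤ i ∧ i < w.length ∧ w.getD i 0 < w.getD (i - 1) 0}


/-!
Inserting `0` after the first `i` letters of `π` changes the descent set in a way that depends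
only on the descent set and on `i`. On compositions this is `insertMinComposition α i`: when `i`
is a partial sum of `α` the next part grows by one (for `i = n` a part `1` is appended), and when
`i` lies strictly inside a part `q`, at offset `r`, that part splits as `(r, q + 1 - r)`, which for
`r = 1` inserts a part `1`. As `i` runs over `0, …, n` these are exactly the covers of `α` in
`𝔖^∞`, and a composition of given weight is determined by its set `S_α`.
-/

theorem isComposition_cons {a : ℕ} {l : List ℕ} :
    IsComposition (a :: l) ↔ 0 < a ∧ IsComposition l := by
  simp [IsComposition]

theorem IsComposition.eq_nil_of_sum_eq_zero {l : List ℕ} (hl : IsComposition l)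
    (h : l.sum = 0) : l = [] := by
  cases l with
  | nil => rfl
  | cons a t => have := (isComposition_cons.1 hl).1; simp at h; omega

theorem mem_Sset_cons {s a : ℕ} {l : List ℕ} :
    s ∈ Sset (a :: l) ↔ (s = a ∧ l ≠ []) ∨ (a ≤ s ∧ s - a ∈ Sset l) := by
  simp only [Sset, Set.mem_ofPred_eq, List.length_cons]
  constructor
  · rintro ⟨_ | _ | t, ht, htl, rfl⟩
    · omega
    · exact Or.inl ⟨by simp, by rintro rfl; simp at htl⟩
    · exact Or.inr ⟨by simp, t + 1, by omega, by omega, by simp [List.take_succ_cons]⟩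
  · rintro (⟨rfl, hl⟩ | ⟨has, t, ht, htl, hs⟩)
    · exact ⟨1, le_rfl, by simpa [List.length_pos_iff] using hl, by simp⟩
    · exact ⟨t + 1, by omega, by omega, by simp [List.take_succ_cons]; omega⟩

theorem pos_of_mem_Sset {l : List ℕ} (hl : IsComposition l) {s : ℕ} (hs : s ∈ Sset l) :
    0 < s := by
  induction l generalizing s with
  | nil => simp [Sset] at hs
  | cons a t ih =>
    rw [isComposition_cons] at hl
    rcases mem_Sset_cons.1 hs with ⟨rfl, -⟩ | ⟨-, h⟩
    · exact hl.1
    · have := ih hl.2 h; omega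

theorem head_le_of_mem_Sset {a s : ℕ} {l : List ℕ} (hs : s ∈ Sset (a :: l)) : a ≤ s := by
  rcases mem_Sset_cons.1 hs with ⟨rfl, -⟩ | ⟨h, -⟩ <;> omega

theorem head_mem_Sset_or_eq_sum (a : ℕ) (l : List ℕ) :
    a ∈ Sset (a :: l) ∨ a = (a :: l).sum := by
  rcases l with _ | ⟨b, l⟩
  · simp
  · exact Or.inl (mem_Sset_cons.2 (Or.inl ⟨rfl, by simp⟩))

theorem Sset_eq_setOf_mem_Sset_cons {a : ℕ} {l : List ℕ} (hl : IsComposition l) :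
    Sset l = {s | 0 < s ∧ a + s ∈ Sset (a :: l)} := by
  ext s
  simp only [Set.mem_ofPred_eq, mem_Sset_cons, Nat.add_sub_cancel_left]
  constructor
  · exact fun hs => ⟨pos_of_mem_Sset hl hs, Or.inr ⟨Nat.le_add_right a s, hs⟩⟩
  · rintro ⟨hs, ⟨h, -⟩ | ⟨-, h⟩⟩
    · omega
    · exact h

-- `b` is the least element of `Sset (b :: u) ∪ {(b :: u).sum}`, and `a` lies in that set.
theorem head_le_head_of_Sset_eq {a b : ℕ} {t u : List ℕ} (hsum : (a :: t).sum = (b :: u).sum)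
    (hS : Sset (a :: t) = Sset (b :: u)) : b ≤ a := by
  rcases head_mem_Sset_or_eq_sum a t with h | h
  · exact head_le_of_mem_Sset (hS ▸ h)
  · rw [h, hsum, List.sum_cons]
    exact Nat.le_add_right b _

theorem IsComposition.eq_of_sum_eq_of_Sset_eq {l₁ l₂ : List ℕ} (h₁ : IsComposition l₁)
    (h₂ : IsComposition l₂) (hsum : l₁.sum = l₂.sum) (hS : Sset l₁ = Sset l₂) : l₁ = l₂ := by
  induction l₁ generalizing l₂ with
  | nil => exact (h₂.eq_nil_of_sum_eq_zero hsum.symm).symm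
  | cons a t ih =>
    rcases l₂ with _ | ⟨b, u⟩
    · exact h₁.eq_nil_of_sum_eq_zero hsum
    obtain rfl : a = b :=
      le_antisymm (head_le_head_of_Sset_eq hsum.symm hS.symm) (head_le_head_of_Sset_eq hsum hS)
    rw [isComposition_cons] at h₁ h₂
    have htu : Sset t = Sset u := by
      rw [Sset_eq_setOf_mem_Sset_cons (a := a) h₁.2, Sset_eq_setOf_mem_Sset_cons (a := a) h₂.2,
        hS]
    rw [ih h₁.2 h₂.2 (by simpa using hsum) htu]

/-- The descent set after inserting a letter smaller than all others after the first `i` letters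
of a word with descent set `D`; a descent at `i` is absorbed into the new one. -/
def insertMinDescents (D : Set ℕ) (i : ℕ) : Set ℕ :=
  {k | (k < i ∧ k ∈ D) ∨ (k = i ∧ 0 < i) ∨ (i + 1 < k ∧ k - 1 ∈ D)}

theorem mem_insertMinDescents {D : Set ℕ} {i k : ℕ} :
    k ∈ insertMinDescents D i ↔ (k < i ∧ k ∈ D) ∨ (k = i ∧ 0 < i) ∨ (i + 1 < k ∧ k - 1 ∈ D) :=
  Iff.rfl

/-- `β(τ)` for `τ` obtained by inserting `0` after the first `i` letters of a word with descent
composition `α`. -/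
def insertMinComposition : List ℕ → ℕ → List ℕ
  | [], _ => [1]
  | a :: t, i =>
    if i = 0 then (a + 1) :: t
    else if i < a then i :: (a + 1 - i) :: t
    else a :: insertMinComposition t (i - a)

theorem insertMinComposition_zero (a : ℕ) (t : List ℕ) :
    insertMinComposition (a :: t) 0 = (a + 1) :: t := by
  simp [insertMinComposition]

theorem insertMinComposition_of_lt {a i : ℕ} (t : List ℕ) (hi : 0 < i) (hia : i < a) :
    insertMinComposition (a :: t) i = i :: (a + 1 - i) :: t := by
  simp [insertMinComposition, hi.ne', hia]

theorem insertMinComposition_of_le {a i : ℕ} (t : List ℕ) (ha : 0 < a) (hai : a ≤ i) :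
    insertMinComposition (a :: t) i = a :: insertMinComposition t (i - a) := by
  simp [insertMinComposition, show i ≠ 0 by omega, not_lt.2 hai]

theorem insertMinComposition_ne_nil (α : List ℕ) (i : ℕ) : insertMinComposition α i ≠ [] := by
  unfold insertMinComposition
  split
  · simp
  · split_ifs <;> simp

theorem sum_insertMinComposition (α : List ℕ) (i : ℕ) :
    (insertMinComposition α i).sum = α.sum + 1 := by
  induction α generalizing i with
  | nil => simp [insertMinComposition]
  | cons a t ih =>
    simp only [insertMinComposition]
    split_ifs <;> simp [ih] <;> omega

theorem IsComposition.insertMinComposition {α : List ℕ} (hα : IsComposition α) (i : ℕ) :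
    IsComposition (insertMinComposition α i) := by
  induction α generalizing i with
  | nil => simp [IsComposition, _root_.insertMinComposition]
  | cons a t ih =>
    rw [isComposition_cons] at hα
    simp only [_root_.insertMinComposition]
    split_ifs
    · exact isComposition_cons.2 ⟨by omega, hα.2⟩
    · exact isComposition_cons.2 ⟨by omega, isComposition_cons.2 ⟨by omega, hα.2⟩⟩
    · exact isComposition_cons.2 ⟨hα.1, ih hα.2 _⟩

theorem Sset_insertMinComposition {α : List ℕ} (hα : IsComposition α) {i : ℕ}
    (hi : i ≤ α.sum) : Sset (insertMinComposition α i) = insertMinDescents (Sset α) i := by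
  induction α generalizing i with
  | nil =>
    obtain rfl : i = 0 := by simpa using hi
    ext k
    simp [insertMinComposition, Sset, mem_insertMinDescents]
  | cons a t ih =>
    rw [isComposition_cons] at hα
    have hpos := fun s => pos_of_mem_Sset hα.2 (s := s)
    rw [List.sum_cons] at hi
    ext k
    rcases Nat.eq_zero_or_pos i with rfl | hi0
    · simp only [insertMinComposition_zero, mem_Sset_cons, mem_insertMinDescents]
      grind
    rcases lt_or_ge i a with hia | hai
    · simp only [insertMinComposition_of_lt t hi0 hia, mem_Sset_cons, mem_insertMinDescents]
      grind
    · have hne := insertMinComposition_ne_nil t (i - a)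
      simp only [insertMinComposition_of_le t hα.1 hai, mem_Sset_cons, mem_insertMinDescents,
        ih hα.2 (show i - a ≤ t.sum by omega)]
      grind

theorem coverSInf_nil_iff {Q : List ℕ} : coverSInf [] Q ↔ Q = [1] := by
  simp [coverSInf]

theorem coverSInf_cons_iff {a : ℕ} {t Q : List ℕ} :
    coverSInf (a :: t) Q ↔ Q = 1 :: a :: t ∨ Q = (a + 1) :: t ∨
      (∃ s, 2 ≤ s ∧ 2 ≤ a - s + 1 ∧ Q = (a - s + 1) :: s :: t) ∨
      ∃ Q', coverSInf t Q' ∧ Q = a :: Q' := by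
  constructor
  · rintro (⟨_ | i, hi, rfl⟩ | ⟨_ | j, hj, rfl⟩ | ⟨_ | j, hj, s, hs, hs', rfl⟩)
    · simp
    · exact Or.inr (Or.inr (Or.inr ⟨_, Or.inl ⟨i, by simpa using hi, rfl⟩, by simp⟩))
    · simp
    · exact Or.inr (Or.inr (Or.inr ⟨_, Or.inr (Or.inl ⟨j, by simpa using hj, rfl⟩), by simp⟩))
    · exact Or.inr (Or.inr (Or.inl ⟨s, hs, hs', by simp⟩))
    · exact Or.inr (Or.inr (Or.inr
        ⟨_, Or.inr (Or.inr ⟨j, by simpa using hj, s, hs, by simpa using hs', rfl⟩), by simp⟩))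
  · rintro (rfl | rfl | ⟨s, hs, hs', rfl⟩ |
      ⟨Q', ⟨i, hi, rfl⟩ | ⟨j, hj, rfl⟩ | ⟨j, hj, s, hs, hs', rfl⟩, rfl⟩)
    · exact Or.inl ⟨0, by simp, by simp⟩
    · exact Or.inr (Or.inl ⟨0, by simp, by simp⟩)
    · exact Or.inr (Or.inr ⟨0, by simp, s, hs, hs', by simp⟩)
    · exact Or.inl ⟨i + 1, by simpa using hi, by simp⟩
    · exact Or.inr (Or.inl ⟨j + 1, by simpa using hj, by simp⟩)
    · exact Or.inr (Or.inr ⟨j + 1, by simpa using hj, s, hs, by simpa using hs', by simp⟩)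

theorem coverSInf_insertMinComposition {α : List ℕ} (hα : IsComposition α) {i : ℕ}
    (hi : i ≤ α.sum) : coverSInf α (insertMinComposition α i) := by
  induction α generalizing i with
  | nil => simp [coverSInf_nil_iff, insertMinComposition]
  | cons a t ih =>
    rw [isComposition_cons] at hα
    rw [List.sum_cons] at hi
    rw [coverSInf_cons_iff]
    rcases Nat.eq_zero_or_pos i with rfl | hi0
    · exact Or.inr (Or.inl (insertMinComposition_zero a t))
    rcases lt_or_ge i a with hia | hai
    · rw [insertMinComposition_of_lt t hi0 hia]
      rcases (show 1 ≤ i from hi0).eq_or_lt with rfl | hi1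
      · simp [show a + 1 - 1 = a by omega]
      · exact Or.inr (Or.inr (Or.inl ⟨a + 1 - i, by omega, by omega, by congr 1; omega⟩))
    · rw [insertMinComposition_of_le t hα.1 hai]
      exact Or.inr (Or.inr (Or.inr ⟨_, ih hα.2 (by omega), rfl⟩))

theorem exists_insertMinComposition_eq_of_coverSInf {α Q : List ℕ} (hα : IsComposition α)
    (h : coverSInf α Q) : ∃ i ≤ α.sum, insertMinComposition α i = Q := by
  induction α generalizing Q with
  | nil => exact ⟨0, le_rfl, by simp [coverSInf_nil_iff.1 h, insertMinComposition]⟩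
  | cons a t ih =>
    rw [isComposition_cons] at hα
    have lift : ∀ {Q'}, coverSInf t Q' →
        ∃ i ≤ (a :: t).sum, insertMinComposition (a :: t) i = a :: Q' := by
      intro Q' hQ'
      obtain ⟨i, hi, rfl⟩ := ih hα.2 hQ'
      refine ⟨a + i, by simp; omega, ?_⟩
      rw [insertMinComposition_of_le t hα.1 (by omega), Nat.add_sub_cancel_left]
    rcases coverSInf_cons_iff.1 h with rfl | rfl | ⟨s, hs, hs', rfl⟩ | ⟨Q', hQ', rfl⟩
    · rcases (show 1 ≤ a from hα.1).eq_or_lt with rfl | ha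
      · exact lift (Or.inl ⟨0, Nat.zero_le _, by simp⟩)
      · refine ⟨1, by simp; omega, ?_⟩
        rw [insertMinComposition_of_lt t one_pos ha, Nat.add_sub_cancel]
    · exact ⟨0, Nat.zero_le _, insertMinComposition_zero a t⟩
    · refine ⟨a - s + 1, by simp; omega, ?_⟩
      rw [insertMinComposition_of_lt t (by omega) (by omega), show a + 1 - (a - s + 1) = s by omega]
    · exact lift hQ'

theorem List.getD_take_append_cons_drop {β : Type*} (w : List β) {i : ℕ} (hi : i ≤ w.length)
    (x d : β) (k : ℕ) :
    (w.take i ++ x :: w.drop i).getD k d =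
      if k < i then w.getD k d else if k = i then x else w.getD (k - 1) d := by
  simp only [List.getD_eq_getElem?_getD]
  have hlen : (w.take i).length = i := by simp [hi]
  split_ifs with hki hke
  · rw [List.getElem?_append_left (by omega), List.getElem?_take_of_lt hki]
  · subst hke; rw [List.getElem?_append_right (by omega)]; simp [hlen]
  · obtain ⟨m, rfl⟩ : ∃ m, k = i + 1 + m := ⟨k - i - 1, by omega⟩
    rw [List.getElem?_append_right (by omega), hlen]
    simp [show i + 1 + m - i = m + 1 by omega, show i + 1 + m - 1 = i + m by omega]

theorem descentSet_take_append_zero_cons_drop {w : List ℕ} (hw : ∀ x ∈ w, 0 < x) {i : ℕ}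
    (hi : i ≤ w.length) :
    descentSet (w.take i ++ 0 :: w.drop i) = insertMinDescents (descentSet w) i := by
  have hpos : ∀ j < w.length, 0 < w.getD j 0 := fun j hj => by
    rw [List.getD_eq_getElem _ _ hj]; exact hw _ (List.getElem_mem hj)
  ext k
  simp only [descentSet, Set.mem_ofPred_eq, mem_insertMinDescents,
    List.getD_take_append_cons_drop w hi, List.length_append, List.length_take,
    List.length_cons, List.length_drop]
  grind

theorem stmt19 (n : ℕ) (α : List ℕ) (hα : IsComposition α) (hsum : α.sum = n)
    (π : List ℕ) (hπ : π.Perm ((List.range n).map (· + 1)))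
    (hdes : descentSet π = Sset α) :
    {β : List ℕ | IsComposition β ∧ β.sum = n + 1 ∧
        ∃ i, i ≤ n ∧ Sset β = descentSet (π.take i ++ 0 :: π.drop i)} =
      {β : List ℕ | coverSInf α β} := by
  subst hsum
  have hlen : π.length = α.sum := by simpa using hπ.length_eq
  have hpos : ∀ x ∈ π, 0 < x := fun x hx => by
    obtain ⟨y, -, rfl⟩ := List.mem_map.1 (hπ.subset hx)
    omega
  have hτ : ∀ i ≤ α.sum,
      descentSet (π.take i ++ 0 :: π.drop i) = Sset (insertMinComposition α i) := fun i hi => by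
    rw [descentSet_take_append_zero_cons_drop hpos (hlen ▸ hi), hdes,
      Sset_insertMinComposition hα hi]
  ext β
  constructor
  · rintro ⟨hβ, hβsum, i, hi, hS⟩
    have hβsum' : β.sum = (insertMinComposition α i).sum := by
      rw [hβsum, sum_insertMinComposition]
    rw [hβ.eq_of_sum_eq_of_Sset_eq (hα.insertMinComposition i) hβsum' (hS.trans (hτ i hi))]
    exact coverSInf_insertMinComposition hα hi
  · intro h
    obtain ⟨i, hi, rfl⟩ := exists_insertMinComposition_eq_of_coverSInf hα h
    exact ⟨hα.insertMinComposition i, sum_insertMinComposition α i, i, hi, (hτ i hi).symm⟩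
end
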